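/- With the symmetric form S = [[0,I_n],[I_n,0]] on K^{2n} and x_1, x_2 as defined above (char K = 0, √x ≠ 0 ≠ y): every subspace V ⊆ K^{2n} that is invariant under both x_1 and x_2 and totally isotropic for S is zero. -/

import Mathlib

open Matrix

noncomputable section

/-- The standard hyperbolic symmetric form matrix `S = [[0, I_n],[I_n, 0]]`. -/
def Smat (K : Type*) [Field K] (n : ℕ) : Matrix (Fin n ⊕ Fin n) (Fin n ⊕ Fin n) K :=
  fromBlocks 0 1 1 0

/-- The symmetric form `B(v, w) = vᵀ S w` on `K^{2n}`. -/
def symForm (K : Type*) [Field K] (n : ℕ) (v w : Fin n ⊕ Fin n → K) : K :=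
  v ⬝ᵥ (Smat K n).mulVec w

/-- `D = diag(1, 2, …, n)`. -/
def Dmat' (K : Type*) [Field K] (n : ℕ) : Matrix (Fin n) (Fin n) K :=
  diagonal fun i => ((i : ℕ) + 1 : K)

/-- The matrix `A` with `a_{ij} = 1` if `i = 1` or `j = 1`, and `0` otherwise. -/
def Aso (K : Type*) [Field K] (n : ℕ) : Matrix (Fin n) (Fin n) K :=
  Matrix.of fun i j => if (i : ℕ) = 0 ∨ (j : ℕ) = 0 then (1 : K) else 0

/-- The matrix `Z` with `z_{1j} = 1` for `j ≠ 1`, `z_{i1} = -1` for `i ≠ 1`,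
and `0` otherwise. -/
def Zso (K : Type*) [Field K] (n : ℕ) : Matrix (Fin n) (Fin n) K :=
  Matrix.of fun i j =>
    if (i : ℕ) = 0 ∧ (j : ℕ) ≠ 0 then (1 : K) else if (j : ℕ) = 0 ∧ (i : ℕ) ≠ 0 then -1 else 0

/-- `x₁ = [[√x·D, 0], [0, -√x·D]]`. -/
def xOne (K : Type*) [Field K] (n : ℕ) (s : K) :
    Matrix (Fin n ⊕ Fin n) (Fin n ⊕ Fin n) K :=
  fromBlocks (s • Dmat' K n) 0 0 (-(s • Dmat' K n))

/-- `x₂ = [[√x·A, y·Z], [y²·Z, -√x·A]]`. -/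
def xTwo (K : Type*) [Field K] (n : ℕ) (s y : K) :
    Matrix (Fin n ⊕ Fin n) (Fin n ⊕ Fin n) K :=
  fromBlocks (s • Aso K n) (y • Zso K n) ((y ^ 2) • Zso K n) (-(s • Aso K n))

/-!
`x₁` is diagonal with pairwise distinct eigenvalues `±s·k`, so a nonzero `x₁`-stable subspace
contains a standard basis vector `e_k`: multiplying a vector of minimal support by `x₁ - μ` for an
eigenvalue `μ` on its support would shrink the support. Then `u = x₂ e_k` lies in the subspace, and
`B(u, u)` is `2sy²` or `-2sy` times `∑ᵢ Aᵢⱼ Zᵢⱼ ∈ {1 - n, 1}`, which is nonzero for `n ≥ 2`.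
-/

open Function Finset

lemma exists_single_mem_of_mul_mem {ι K : Type*} [Fintype ι] [DecidableEq ι] [Field K]
    {d : ι → K} (hd : Injective d) {V : Submodule K (ι → K)} (hV : ∀ v ∈ V, d * v ∈ V)
    {v : ι → K} (hv : v ∈ V) (hv0 : v ≠ 0) : ∃ k, Pi.single k 1 ∈ V := by
  classical
  induction hc : #{k | v k ≠ 0} using Nat.strong_induction_on generalizing v with
  | _ m ih =>
    obtain ⟨a, ha⟩ := Function.ne_iff.mp hv0
    by_cases hsupp : ∀ k ≠ a, v k = 0
    · refine ⟨a, ?_⟩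
      convert V.smul_mem (v a)⁻¹ hv using 1
      ext k
      by_cases hk : k = a
      · subst hk; simp [inv_mul_cancel₀ ha]
      · simp [hk, hsupp k hk]
    · push Not at hsupp
      obtain ⟨b, hba, hb⟩ := hsupp
      set w := d * v - d a • v
      have hw : ∀ k, w k = (d k - d a) * v k := fun k => by simp [w, sub_mul]
      have hwb : w b ≠ 0 := by rw [hw]; exact mul_ne_zero (sub_ne_zero.mpr (hd.ne hba)) hb
      have hlt : #{k | w k ≠ 0} < #{k | v k ≠ 0} := by
        refine card_lt_card ((ssubset_iff_of_subset fun k => ?_).2 ⟨a, by simpa using ha, ?_⟩)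
        · simp only [mem_filter, mem_univ, true_and, hw]; exact right_ne_zero_of_mul
        · simp [hw]
      exact ih _ (hc ▸ hlt) (V.sub_mem (hV v hv) (V.smul_mem _ hv))
        (fun h => hwb (congrFun h b)) rfl

def xOneWeight (n : ℕ) : Fin n ⊕ Fin n → ℤ :=
  Sum.elim (fun i => i + 1) (fun i => -(i + 1))

lemma xOneWeight_injective (n : ℕ) : Injective (xOneWeight n) := by
  rintro (i | i) (j | j) h <;> simp only [xOneWeight, Sum.elim_inl, Sum.elim_inr] at h <;>
    first | omega | simp [Fin.ext_iff]; omega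

lemma xOne_eq_diagonal (K : Type*) [Field K] (n : ℕ) (s : K) :
    xOne K n s = diagonal fun k => s * (xOneWeight n k : K) := by
  ext (i | i) (j | j) <;> by_cases h : i = j <;>
    simp [xOne, Dmat', xOneWeight, h, add_comm, mul_add]

lemma symForm_self {K : Type*} [Field K] {n : ℕ} (u : Fin n ⊕ Fin n → K) :
    symForm K n u u = 2 * ∑ i, u (Sum.inl i) * u (Sum.inr i) := by
  rw [symForm, Smat, ← Sum.elim_comp_inl_inr u, fromBlocks_mulVec]
  simp [dotProduct, Fintype.sum_sum_type, two_mul, mul_comm]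

lemma sum_Aso_mul_Zso_ne_zero {K : Type*} [Field K] [CharZero K] {n : ℕ} (hn : 2 ≤ n)
    (j : Fin n) : ∑ i, Aso K n i j * Zso K n i j ≠ 0 := by
  obtain ⟨m, rfl⟩ : ∃ m, n = m + 2 := ⟨n - 2, by omega⟩
  cases j using Fin.cases with
  | zero =>
    have hm : -((m : K) + 1) ≠ 0 := neg_ne_zero.2 (Nat.cast_add_one_ne_zero m)
    simpa [Fin.sum_univ_succ, Aso, Zso] using hm
  | succ j => simp [Aso, Zso]

lemma symForm_xTwo_mulVec_single_ne_zero {K : Type*} [Field K] [CharZero K] {n : ℕ}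
    (hn : 2 ≤ n) {s y : K} (hs : s ≠ 0) (hy : y ≠ 0) (k : Fin n ⊕ Fin n) :
    symForm K n (xTwo K n s y *ᵥ Pi.single k 1) (xTwo K n s y *ᵥ Pi.single k 1) ≠ 0 := by
  rw [mulVec_single_one, symForm_self]
  rcases k with j | j
  · have : ∑ i, s * Aso K n i j * (y ^ 2 * Zso K n i j)
        = s * y ^ 2 * ∑ i, Aso K n i j * Zso K n i j := by
      rw [mul_sum]; exact sum_congr rfl fun _ _ => by ring
    simp only [xTwo, col_apply, fromBlocks_apply₁₁, fromBlocks_apply₂₁, Matrix.smul_apply,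
      smul_eq_mul, this]
    exact mul_ne_zero two_ne_zero
      (mul_ne_zero (mul_ne_zero hs (pow_ne_zero 2 hy)) (sum_Aso_mul_Zso_ne_zero hn j))
  · have : ∑ i, y * Zso K n i j * -(s * Aso K n i j)
        = -(s * y) * ∑ i, Aso K n i j * Zso K n i j := by
      rw [mul_sum]; exact sum_congr rfl fun _ _ => by ring
    simp only [xTwo, col_apply, fromBlocks_apply₁₂, fromBlocks_apply₂₂, Matrix.smul_apply,
      smul_eq_mul, Matrix.neg_apply, this]
    exact mul_ne_zero two_ne_zero
      (mul_ne_zero (neg_ne_zero.mpr (mul_ne_zero hs hy)) (sum_Aso_mul_Zso_ne_zero hn j))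

/-- every subspace of `K^{2n}` invariant under `x₁` and `x₂` and
totally isotropic for the symmetric form `S` is zero. -/
theorem stmt12 (K : Type*) [Field K] [CharZero K] (n : ℕ) (hn : 2 ≤ n)
    (s y : K) (hs : s ≠ 0) (hy : y ≠ 0)
    (V : Submodule K (Fin n ⊕ Fin n → K))
    (h1 : ∀ v ∈ V, (xOne K n s).mulVec v ∈ V)
    (h2 : ∀ v ∈ V, (xTwo K n s y).mulVec v ∈ V)
    (hiso : ∀ v ∈ V, ∀ w ∈ V, symForm K n v w = 0) :
    V = ⊥ := by
  by_contra hV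
  obtain ⟨v, hv, hv0⟩ := Submodule.exists_mem_ne_zero_of_ne_bot hV
  have hweight : Injective fun k => s * (xOneWeight n k : K) :=
    (mul_right_injective₀ hs).comp (Int.cast_injective.comp (xOneWeight_injective n))
  have hx1 : ∀ v, xOne K n s *ᵥ v = (fun k => s * (xOneWeight n k : K)) * v := fun v => by
    rw [xOne_eq_diagonal]; exact funext (mulVec_diagonal _ v)
  obtain ⟨k, hk⟩ := exists_single_mem_of_mul_mem hweight (fun v hv => hx1 v ▸ h1 v hv) hv hv0
  exact symForm_xTwo_mulVec_single_ne_zero hn hs hy k (hiso _ (h2 _ hk) _ (h2 _ hk))
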